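/- arXiv:2402.12987 — 2 statements merged into one kernel-verified Lean document; each statement's English description precedes it below -/
import Mathlib

section
/- Let d ≥ 1 and let μ₁, μ₂ ∈ ℝ^d with μ₁ ≠ μ₂. Let p_in, p_out be positive real numbers, and let n₁, n₂, m₁, m₂ be positive natural numbers (n₁ = C₁(V₁) and n₂ = C₂(V₁) are the numbers of community-1 and community-2 vertices in the first vertex batch, and m₁ = C₁(V₂), m₂ = C₂(V₂) those in the second batch). Define the expected mean-aggregated input of a community-1 vertex before and after the second batch arrives as E₁ = (n₁·p_in·μ₁ + n₂·p_out·μ₂)/(n₁·p_in + n₂·p_out) and E₂ = ((n₁+m₁)·p_in·μ₁ + (n₂+m₂)·p_out·μ₂)/((n₁+m₁)·p_in + (n₂+m₂)·p_out). If n₁·m₂ ≠ n₂·m₁ (i.e., C₁(V₁)/C₂(V₁) ≠ C₁(V₂)/C₂(V₂)), then E₁ ≠ E₂. -/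
/-!
`E₁` and `E₂` are weighted means `(a + b)⁻¹ • (a • μ₁ + b • μ₂)` of `μ₁, μ₂`, with weights
`(a, b) = (n₁ p_in, n₂ p_out)` and `(a', b') = ((n₁ + m₁) p_in, (n₂ + m₂) p_out)`. Such a mean is
the point at parameter `a / (a + b)` on the line from `μ₂` to `μ₁`, an injective parametrisation
since `μ₁ ≠ μ₂`. So `E₁ = E₂` forces `a b' = a' b`, whereas
`a b' - a' b = p_in p_out (n₁ m₂ - n₂ m₁) ≠ 0`.
-/

section WeightedMean

variable {K V : Type*} [Field K] [AddCommGroup V] [Module K V]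

theorem inv_smul_add_smul_eq_lineMap {a b : K} (h : a + b ≠ 0) (x y : V) :
    (a + b)⁻¹ • (a • x + b • y) = AffineMap.lineMap y x (a / (a + b)) := by
  rw [AffineMap.lineMap_apply_module, one_sub_div h, add_sub_cancel_left, smul_add, smul_smul,
    smul_smul, div_eq_inv_mul, div_eq_inv_mul, add_comm]

theorem inv_smul_add_smul_eq_iff {a b a' b' : K} (h : a + b ≠ 0) (h' : a' + b' ≠ 0)
    {x y : V} (hxy : x ≠ y) :
    (a + b)⁻¹ • (a • x + b • y) = (a' + b')⁻¹ • (a' • x + b' • y) ↔ a * b' = a' * b := by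
  rw [inv_smul_add_smul_eq_lineMap h, inv_smul_add_smul_eq_lineMap h',
    (AffineMap.lineMap_injective K hxy.symm).eq_iff, div_eq_div_iff h h']
  constructor <;> intro heq <;> linear_combination heq

end WeightedMean

theorem imbalanced_observation_general
    {d : ℕ} (μ₁ μ₂ : EuclideanSpace ℝ (Fin d)) (hμ : μ₁ ≠ μ₂)
    (p_in p_out : ℝ) (hpin : 0 < p_in) (hpout : 0 < p_out)
    (n₁ n₂ m₁ m₂ : ℕ) (hn₁ : 0 < n₁)
    (E₁ E₂ : EuclideanSpace ℝ (Fin d))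
    (hE₁ : E₁ = ((n₁ : ℝ) * p_in + (n₂ : ℝ) * p_out)⁻¹ •
      (((n₁ : ℝ) * p_in) • μ₁ + ((n₂ : ℝ) * p_out) • μ₂))
    (hE₂ : E₂ = (((n₁ : ℝ) + m₁) * p_in + ((n₂ : ℝ) + m₂) * p_out)⁻¹ •
      ((((n₁ : ℝ) + m₁) * p_in) • μ₁ + (((n₂ : ℝ) + m₂) * p_out) • μ₂))
    (hratio : n₁ * m₂ ≠ n₂ * m₁) :
    E₁ ≠ E₂ := by
  have hS₁ : (n₁ : ℝ) * p_in + (n₂ : ℝ) * p_out ≠ 0 := by positivity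
  have hS₂ : ((n₁ : ℝ) + m₁) * p_in + ((n₂ : ℝ) + m₂) * p_out ≠ 0 := by positivity
  have hratio' : (n₁ : ℝ) * m₂ ≠ n₂ * m₁ := by exact_mod_cast hratio
  have hp : p_in * p_out ≠ 0 := by positivity
  rw [hE₁, hE₂, Ne, inv_smul_add_smul_eq_iff hS₁ hS₂ hμ]
  refine fun h => hratio' (sub_eq_zero.mp ((mul_eq_zero.mp ?_).resolve_left hp))
  linear_combination h

/-- Proposition 1 (Imbalanced Observation): in the two-community CSBM, if the
community ratios of the two vertex batches differ (`n₁·m₂ ≠ n₂·m₁`), then the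
expected mean-aggregated input of a community-1 vertex changes after the second
batch arrives. -/
theorem imbalanced_observation
    {d : ℕ} (hd : 1 ≤ d) (μ₁ μ₂ : EuclideanSpace ℝ (Fin d)) (hμ : μ₁ ≠ μ₂)
    (p_in p_out : ℝ) (hpin : 0 < p_in) (hpout : 0 < p_out)
    (n₁ n₂ m₁ m₂ : ℕ) (hn₁ : 0 < n₁) (hn₂ : 0 < n₂) (hm₁ : 0 < m₁) (hm₂ : 0 < m₂)
    (E₁ E₂ : EuclideanSpace ℝ (Fin d))
    (hE₁ : E₁ = ((n₁ : ℝ) * p_in + (n₂ : ℝ) * p_out)⁻¹ •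
      (((n₁ : ℝ) * p_in) • μ₁ + ((n₂ : ℝ) * p_out) • μ₂))
    (hE₂ : E₂ = (((n₁ : ℝ) + m₁) * p_in + ((n₂ : ℝ) + m₂) * p_out)⁻¹ •
      ((((n₁ : ℝ) + m₁) * p_in) • μ₁ + (((n₂ : ℝ) + m₂) * p_out) • μ₂))
    (hratio : n₁ * m₂ ≠ n₂ * m₁) :
    E₁ ≠ E₂ :=
  imbalanced_observation_general μ₁ μ₂ hμ p_in p_out hpin hpout n₁ n₂ m₁ m₂ hn₁ E₁ E₂ hE₁ hE₂ hratio
end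

section
/- Let Z be a measurable space and let μ₁, μ₂, μ₃ be probability measures on Z × ℝ with Z-marginals ν₁, ν₂, ν₃. For a measurable h : Z → ℝ define the risk R_{μ}(h) := ∫ |h(z) − y| dμ(z,y). Let H be a nonempty set of measurable functions Z → ℝ, let F be a set of measurable functions Z → ℝ that is closed under negation and contains z ↦ |h(z) − h'(z)| for all h, h' ∈ H, and define d_F(ν, ν') := sup_{f ∈ F} (∫ f dν − ∫ f dν'). Assume all risks R_{μᵢ}(h) for h ∈ H are finite, all relevant integrands are integrable, the suprema defining d_F(ν₁,ν₂) and d_F(ν₁,ν₃) are finite, and there exists h₂* ∈ H attaining min_{h∈H} R_{μ₂}(h). Set λ := inf_{h ∈ H} (R_{μ₂}(h) + R_{μ₃}(h)). Then for every h ∈ H, R_{μ₂}(h) ≤ R_{μ₃}(h) + 2·d_F(ν₁, ν₂) + d_F(ν₁, ν₃) + λ. -/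
/-!
Fix `h, h' ∈ H` and put `f = |h - h'| ∈ F`. By the triangle inequality for the absolute loss,
`R₂(h) ≤ R₂(h') + ∫ f dν₂`, and `∫ f dν₃ ≤ R₃(h) + R₃(h')`. Moving `∫ f` from `ν₂` to `ν₁` costs
`d_F(ν₁, ν₂)` (this uses `-f ∈ F`), and from `ν₁` to `ν₃` costs `d_F(ν₁, ν₃)`. Taking the infimum
over `h'` gives the bound with one copy of `d_F(ν₁, ν₂)`; the second copy is free since the
discrepancy of a class closed under negation is nonnegative.
-/

open MeasureTheory

/-- Generalization risk with absolute loss: `R_μ(h) = ∫ |h(z) - y| dμ(z,y)`. -/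
noncomputable def risk {Z : Type*} [MeasurableSpace Z]
    (μ : Measure (Z × ℝ)) (h : Z → ℝ) : ℝ :=
  ∫ p, |h p.1 - p.2| ∂μ

/-- Discrepancy over a function class `F`:
`d_F(ν, ν') = sup_{f ∈ F} (∫ f dν - ∫ f dν')`. -/
noncomputable def discrepancy {Z : Type*} [MeasurableSpace Z]
    (F : Set (Z → ℝ)) (ν ν' : Measure Z) : ℝ :=
  sSup ((fun f => (∫ z, f z ∂ν) - ∫ z, f z ∂ν') '' F)

section Discrepancy

variable {Z : Type*} [MeasurableSpace Z] {F : Set (Z → ℝ)} {ν ν' : Measure Z} {f : Z → ℝ}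

theorem integral_sub_integral_le_discrepancy (hF : BddAbove
    ((fun f => (∫ z, f z ∂ν) - ∫ z, f z ∂ν') '' F)) (hf : f ∈ F) :
    (∫ z, f z ∂ν) - ∫ z, f z ∂ν' ≤ discrepancy F ν ν' :=
  le_csSup hF ⟨f, hf, rfl⟩

theorem integral_sub_integral_le_discrepancy_of_neg_mem (hF : BddAbove
    ((fun f => (∫ z, f z ∂ν) - ∫ z, f z ∂ν') '' F)) (hf : (fun z => -f z) ∈ F) :
    (∫ z, f z ∂ν') - ∫ z, f z ∂ν ≤ discrepancy F ν ν' := by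
  have := integral_sub_integral_le_discrepancy hF hf
  rw [integral_neg, integral_neg] at this
  linarith

theorem discrepancy_nonneg (hF : BddAbove ((fun f => (∫ z, f z ∂ν) - ∫ z, f z ∂ν') '' F))
    (hf : f ∈ F) (hf_neg : (fun z => -f z) ∈ F) :
    0 ≤ discrepancy F ν ν' := by
  have := integral_sub_integral_le_discrepancy hF hf
  have := integral_sub_integral_le_discrepancy_of_neg_mem hF hf_neg
  linarith

end Discrepancy

section Risk

variable {Z : Type*} [MeasurableSpace Z] {μ : Measure (Z × ℝ)} {h h' : Z → ℝ}

theorem integrable_abs_sub_comp_fst (hh : Measurable h) (hh' : Measurable h')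
    (hi : Integrable (fun p : Z × ℝ => |h p.1 - p.2|) μ)
    (hi' : Integrable (fun p : Z × ℝ => |h' p.1 - p.2|) μ) :
    Integrable (fun p : Z × ℝ => |h p.1 - h' p.1|) μ := by
  refine (hi.add hi').mono'
    ((hh.comp measurable_fst).sub (hh'.comp measurable_fst)).abs.aestronglyMeasurable
    (ae_of_all _ fun p => ?_)
  rw [Real.norm_eq_abs, abs_abs, Pi.add_apply, abs_sub_comm (h' p.1)]
  exact abs_sub_le _ _ _

theorem integral_map_fst_abs_sub (hh : Measurable h) (hh' : Measurable h') :
    ∫ z, |h z - h' z| ∂(μ.map Prod.fst) = ∫ p : Z × ℝ, |h p.1 - h' p.1| ∂μ :=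
  integral_map measurable_fst.aemeasurable (hh.sub hh').abs.aestronglyMeasurable

theorem risk_le_risk_add_integral_abs_sub (hh : Measurable h) (hh' : Measurable h')
    (hi : Integrable (fun p : Z × ℝ => |h p.1 - p.2|) μ)
    (hi' : Integrable (fun p : Z × ℝ => |h' p.1 - p.2|) μ) :
    risk μ h ≤ risk μ h' + ∫ z, |h z - h' z| ∂(μ.map Prod.fst) := by
  rw [integral_map_fst_abs_sub hh hh', risk, risk,
    ← integral_add hi' (integrable_abs_sub_comp_fst hh hh' hi hi')]
  exact integral_mono hi (hi'.add (integrable_abs_sub_comp_fst hh hh' hi hi')) fun p =>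
    (abs_sub_le (h p.1) (h' p.1) p.2).trans_eq (add_comm _ _)

theorem integral_abs_sub_le_risk_add_risk (hh : Measurable h) (hh' : Measurable h')
    (hi : Integrable (fun p : Z × ℝ => |h p.1 - p.2|) μ)
    (hi' : Integrable (fun p : Z × ℝ => |h' p.1 - p.2|) μ) :
    ∫ z, |h z - h' z| ∂(μ.map Prod.fst) ≤ risk μ h + risk μ h' := by
  rw [integral_map_fst_abs_sub hh hh', risk, risk, ← integral_add hi hi']
  refine integral_mono (integrable_abs_sub_comp_fst hh hh' hi hi') (hi.add hi') fun p => ?_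
  rw [abs_sub_comm (h' p.1)]
  exact abs_sub_le _ _ _

end Risk

theorem risk_le_risk_add_discrepancy_add_joint_risk {Z : Type*} [MeasurableSpace Z]
    {μ₂ μ₃ : Measure (Z × ℝ)} {ν₁ : Measure Z} {F : Set (Z → ℝ)} {h h' : Z → ℝ}
    (hh : Measurable h) (hh' : Measurable h')
    (hF : (fun z => |h z - h' z|) ∈ F) (hF_neg : (fun z => -|h z - h' z|) ∈ F)
    (hi₂ : Integrable (fun p : Z × ℝ => |h p.1 - p.2|) μ₂)
    (hi₂' : Integrable (fun p : Z × ℝ => |h' p.1 - p.2|) μ₂)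
    (hi₃ : Integrable (fun p : Z × ℝ => |h p.1 - p.2|) μ₃)
    (hi₃' : Integrable (fun p : Z × ℝ => |h' p.1 - p.2|) μ₃)
    (hbdd₁₂ : BddAbove ((fun f => (∫ z, f z ∂ν₁) - ∫ z, f z ∂(μ₂.map Prod.fst)) '' F))
    (hbdd₁₃ : BddAbove ((fun f => (∫ z, f z ∂ν₁) - ∫ z, f z ∂(μ₃.map Prod.fst)) '' F)) :
    risk μ₂ h ≤ risk μ₃ h + discrepancy F ν₁ (μ₂.map Prod.fst) +
      discrepancy F ν₁ (μ₃.map Prod.fst) + (risk μ₂ h' + risk μ₃ h') := by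
  have h₂ := risk_le_risk_add_integral_abs_sub hh hh' hi₂ hi₂'
  have h₂₁ := integral_sub_integral_le_discrepancy_of_neg_mem hbdd₁₂ hF_neg
  have h₁₃ := integral_sub_integral_le_discrepancy hbdd₁₃ hF
  have h₃ := integral_abs_sub_le_risk_add_risk hh hh' hi₃ hi₃'
  linarith

theorem cfr_bound_general
    {Z : Type*} [MeasurableSpace Z]
    (μ₂ μ₃ : Measure (Z × ℝ))
    (ν₁ ν₂ ν₃ : Measure Z)
    (hν₂ : ν₂ = μ₂.map Prod.fst)
    (hν₃ : ν₃ = μ₃.map Prod.fst)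
    (H : Set (Z → ℝ))
    (hHmeas : ∀ h ∈ H, Measurable h)
    (F : Set (Z → ℝ))
    (hFneg : ∀ f ∈ F, (fun z => -(f z)) ∈ F)
    (hFpair : ∀ h ∈ H, ∀ h' ∈ H, (fun z => |h z - h' z|) ∈ F)
    (hint₂ : ∀ h ∈ H, Integrable (fun p : Z × ℝ => |h p.1 - p.2|) μ₂)
    (hint₃ : ∀ h ∈ H, Integrable (fun p : Z × ℝ => |h p.1 - p.2|) μ₃)
    (hbdd₁₂ : BddAbove ((fun f => (∫ z, f z ∂ν₁) - ∫ z, f z ∂ν₂) '' F))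
    (hbdd₁₃ : BddAbove ((fun f => (∫ z, f z ∂ν₁) - ∫ z, f z ∂ν₃) '' F))
    (lam : ℝ) (hlam : lam = sInf ((fun h => risk μ₂ h + risk μ₃ h) '' H)) :
    ∀ h ∈ H, risk μ₂ h ≤ risk μ₃ h +
      2 * discrepancy F ν₁ ν₂ + discrepancy F ν₁ ν₃ + lam := by
  subst hν₂ hν₃ hlam
  intro h hh
  have hinf : risk μ₂ h - (risk μ₃ h + discrepancy F ν₁ (μ₂.map Prod.fst) +
      discrepancy F ν₁ (μ₃.map Prod.fst)) ≤ sInf ((fun h => risk μ₂ h + risk μ₃ h) '' H) := by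
    refine le_csInf ⟨_, h, hh, rfl⟩ ?_
    rintro _ ⟨h', hh', rfl⟩
    have hF := hFpair h hh h' hh'
    have := risk_le_risk_add_discrepancy_add_joint_risk (hHmeas h hh) (hHmeas h' hh') hF
      (hFneg _ hF) (hint₂ h hh) (hint₂ h' hh') (hint₃ h hh) (hint₃ h' hh') hbdd₁₂ hbdd₁₃
    linarith
  have hd₁₂ := discrepancy_nonneg hbdd₁₂ (hFpair h hh h hh) (hFneg _ (hFpair h hh h hh))
  linarith

/-- Theorem 1 (CFR Bound) for the NGIL-2 problem with absolute loss: the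
catastrophic forgetting risk `R_{μ₂}(h)` is bounded by the risk on the new task
plus the structural-shift discrepancies and the joint optimal risk `λ`. -/
theorem cfr_bound
    {Z : Type*} [MeasurableSpace Z]
    (μ₁ μ₂ μ₃ : Measure (Z × ℝ))
    [IsProbabilityMeasure μ₁] [IsProbabilityMeasure μ₂] [IsProbabilityMeasure μ₃]
    (ν₁ ν₂ ν₃ : Measure Z)
    (hν₁ : ν₁ = μ₁.map Prod.fst) (hν₂ : ν₂ = μ₂.map Prod.fst)
    (hν₃ : ν₃ = μ₃.map Prod.fst)
    (H : Set (Z → ℝ)) (hH : H.Nonempty)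
    (hHmeas : ∀ h ∈ H, Measurable h)
    (F : Set (Z → ℝ)) (hFmeas : ∀ f ∈ F, Measurable f)
    (hFneg : ∀ f ∈ F, (fun z => -(f z)) ∈ F)
    (hFpair : ∀ h ∈ H, ∀ h' ∈ H, (fun z => |h z - h' z|) ∈ F)
    (hint₁ : ∀ h ∈ H, Integrable (fun p : Z × ℝ => |h p.1 - p.2|) μ₁)
    (hint₂ : ∀ h ∈ H, Integrable (fun p : Z × ℝ => |h p.1 - p.2|) μ₂)
    (hint₃ : ∀ h ∈ H, Integrable (fun p : Z × ℝ => |h p.1 - p.2|) μ₃)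
    (hpint₁ : ∀ h ∈ H, ∀ h' ∈ H, Integrable (fun z => |h z - h' z|) ν₁)
    (hpint₂ : ∀ h ∈ H, ∀ h' ∈ H, Integrable (fun z => |h z - h' z|) ν₂)
    (hpint₃ : ∀ h ∈ H, ∀ h' ∈ H, Integrable (fun z => |h z - h' z|) ν₃)
    (hbdd₁₂ : BddAbove ((fun f => (∫ z, f z ∂ν₁) - ∫ z, f z ∂ν₂) '' F))
    (hbdd₁₃ : BddAbove ((fun f => (∫ z, f z ∂ν₁) - ∫ z, f z ∂ν₃) '' F))
    (h₂star : Z → ℝ) (h₂star_mem : h₂star ∈ H)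
    (h₂star_min : ∀ h ∈ H, risk μ₂ h₂star ≤ risk μ₂ h)
    (lam : ℝ) (hlam : lam = sInf ((fun h => risk μ₂ h + risk μ₃ h) '' H)) :
    ∀ h ∈ H, risk μ₂ h ≤ risk μ₃ h +
      2 * discrepancy F ν₁ ν₂ + discrepancy F ν₁ ν₃ + lam :=
  cfr_bound_general μ₂ μ₃ ν₁ ν₂ ν₃ hν₂ hν₃ H hHmeas F hFneg hFpair hint₂ hint₃ hbdd₁₂ hbdd₁₃ lam
    hlam
end
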